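/- arXiv:1006.5295 — 2 statements merged into one kernel-verified Lean document; each statement's English description precedes it below -/
import Mathlib

section
/- Inverse Mapping Theorem over a test-ring: Let A be a test-ring, U an m-adic neighbourhood of 0 in C_A^m, and f : U → C_A^m a textile map with f(0) = 0. Assume f = ℓ + h and f(U) ⊆ W, where ℓ : U → W is a linear textile map that is invertible, i.e. there is a linear map ℓ̃ : W → U with ℓ∘ℓ̃ = id_W and ℓ̃∘ℓ = id_U. If ℓ̃∘h is contractive on U with respect to the refined order W(·), then f admits an inverse on U: there is a textile map g : f(U) → U with f∘g = id on f(U) and g∘f = id on U. -/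
/- Inverse Mapping Theorem for textile maps over a test-ring. -/

noncomputable section

open MvPowerSeries

/-- Coefficient family of a vector of cords with coefficients in `A`. -/
def cf {A : Type} [CommRing A] {n q : ℕ} (c : Fin q → MvPowerSeries (Fin n) A) :
    Fin q × (Fin n →₀ ℕ) → A :=
  fun ν => MvPowerSeries.coeff ν.2 (c ν.1)

/-- Data of a textile map `C_A^q → C_A^p`. -/
def TexData (A : Type) [CommRing A] (n q p : ℕ) : Type :=
  Fin p × (Fin n →₀ ℕ) → MvPolynomial (Fin q × (Fin n →₀ ℕ)) A

/-- Evaluation of textile data. -/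
def TexData.eval {A : Type} [CommRing A] {n q p : ℕ} (F : TexData A n q p)
    (c : Fin q → MvPowerSeries (Fin n) A) : Fin p → MvPowerSeries (Fin n) A :=
  fun j => (fun d => MvPolynomial.eval (cf c) (F (j, d)) : (Fin n →₀ ℕ) → A)

/-- A map between cord spaces over `A` is textile if it is the evaluation of textile data. -/
def IsTextile {A : Type} [CommRing A] {n q p : ℕ}
    (f : (Fin q → MvPowerSeries (Fin n) A) → Fin p → MvPowerSeries (Fin n) A) : Prop :=
  ∃ F : TexData A n q p, ∀ c, f c = F.eval c

/-- The order of a vector of cords, with values in `ℕ∞`. -/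
def ordV {A : Type} [CommRing A] {n q : ℕ} (c : Fin q → MvPowerSeries (Fin n) A) : ℕ∞ :=
  sInf {N : ℕ∞ | ∃ (j : Fin q) (d : Fin n →₀ ℕ),
    MvPowerSeries.coeff d (c j) ≠ 0 ∧ N = (d.sum fun _ e => e : ℕ)}

-- `pow(a)`: the largest `i` with `a ∈ 𝔫^i` for `a ≠ 0`, and `N` for `a = 0`.
open Classical in
def powIdx {A : Type} [CommRing A] (𝔫 : Ideal A) (N : ℕ) (a : A) : ℕ :=
  if a = 0 then N else sSup {i : ℕ | a ∈ 𝔫 ^ i}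

/-- The second component of the refined order: the minimum of `pow` over the nonzero
coefficients of minimal order. -/
def powAtMin {A : Type} [CommRing A] (𝔫 : Ideal A) (N : ℕ) {n q : ℕ}
    (c : Fin q → MvPowerSeries (Fin n) A) : ℕ :=
  sInf {e : ℕ | ∃ (j : Fin q) (d : Fin n →₀ ℕ),
    MvPowerSeries.coeff d (c j) ≠ 0 ∧ ((d.sum fun _ e' => e' : ℕ) : ℕ∞) = ordV c ∧
    e = powIdx 𝔫 N (MvPowerSeries.coeff d (c j))}

/-- The refined order `W(c) = (ord c, pow(c_{ord c}))`. -/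
def WOrd {A : Type} [CommRing A] (𝔫 : Ideal A) (N : ℕ) {n q : ℕ}
    (c : Fin q → MvPowerSeries (Fin n) A) : ℕ∞ × ℕ :=
  (ordV c, powAtMin 𝔫 N c)

/-- Lexicographic comparison on `ℕ∞ × ℕ`. -/
def refLt (x y : ℕ∞ × ℕ) : Prop :=
  x.1 < y.1 ∨ (x.1 = y.1 ∧ x.2 < y.2)

/-- The `m`-adic neighbourhood `m^l · C_A^q` of `0`. -/
def nbhd (A : Type) [CommRing A] (n q l : ℕ) : Set (Fin q → MvPowerSeries (Fin n) A) :=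
  {c | ∀ (j : Fin q) (d : Fin n →₀ ℕ),
    (d.sum fun _ e => e) < l → MvPowerSeries.coeff d (c j) = 0}

/-! Put `K = ℓ̃ ∘ (f - ℓ)`, a textile map that agrees with `ℓ̃ ∘ h` on `U`. A point `a ∈ U` is
the fixed point of the `W`-contraction `T b = ℓ̃ (f a) - K b` of `U`. Since `pow < N` on nonzero
coefficients, the order of `T^[s] (ℓ̃ (f a)) - a` grows by at least one every `N` steps, so the
coefficients of degree `D` of `a` are those of the `N (D + 1)`-th iterate, which are polynomials
in the coefficients of `f a`. Reading every coefficient off its own iterate gives the inverse. -/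

section Textile

variable {A : Type} [CommRing A] {n q p r : ℕ}

@[simp]
lemma TexData.coeff_eval (F : TexData A n q p) (c : Fin q → MvPowerSeries (Fin n) A)
    (j : Fin p) (d : Fin n →₀ ℕ) :
    MvPowerSeries.coeff d (F.eval c j) = MvPolynomial.eval (cf c) (F (j, d)) :=
  rfl

lemma IsTextile.sub
    {f g : (Fin q → MvPowerSeries (Fin n) A) → Fin p → MvPowerSeries (Fin n) A}
    (hf : IsTextile f) (hg : IsTextile g) : IsTextile fun c => f c - g c := by
  obtain ⟨F, hF⟩ := hf
  obtain ⟨G, hG⟩ := hg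
  refine ⟨fun ν => F ν - G ν, fun c => ?_⟩
  ext j d
  simp only [hF, hG, Pi.sub_apply, map_sub, TexData.coeff_eval]
  exact (map_sub (MvPolynomial.eval (cf c)) _ _).symm

lemma IsTextile.comp
    {f : (Fin q → MvPowerSeries (Fin n) A) → Fin p → MvPowerSeries (Fin n) A}
    {g : (Fin r → MvPowerSeries (Fin n) A) → Fin q → MvPowerSeries (Fin n) A}
    (hf : IsTextile f) (hg : IsTextile g) : IsTextile fun c => f (g c) := by
  obtain ⟨F, hF⟩ := hf
  obtain ⟨G, hG⟩ := hg
  refine ⟨fun ν => MvPolynomial.bind₁ G (F ν), fun c => ?_⟩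
  ext j d
  simp only [hF, hG, TexData.coeff_eval]
  exact (MvPolynomial.eval₂Hom_bind₁ (RingHom.id A) (cf c) G (F (j, d))).symm

lemma isTextile_iterate_sub
    {L K : (Fin q → MvPowerSeries (Fin n) A) → Fin q → MvPowerSeries (Fin n) A}
    (hL : IsTextile L) (hK : IsTextile K) :
    ∀ s, IsTextile fun w => (fun b => L w - K b)^[s] (L w)
  | 0 => hL
  | s + 1 => by
    simp only [Function.iterate_succ_apply']
    exact hL.sub (hK.comp (isTextile_iterate_sub hL hK s))

def coeffDiag
    (G : ℕ → (Fin q → MvPowerSeries (Fin n) A) → Fin p → MvPowerSeries (Fin n) A)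
    (σ : (Fin n →₀ ℕ) → ℕ) : (Fin q → MvPowerSeries (Fin n) A) → Fin p → MvPowerSeries (Fin n) A :=
  fun c j d => MvPowerSeries.coeff d (G (σ d) c j)

lemma isTextile_coeffDiag
    {G : ℕ → (Fin q → MvPowerSeries (Fin n) A) → Fin p → MvPowerSeries (Fin n) A}
    (hG : ∀ s, IsTextile (G s)) (σ : (Fin n →₀ ℕ) → ℕ) : IsTextile (coeffDiag G σ) := by
  choose F hF using hG
  refine ⟨fun ν => F (σ ν.2) ν, fun c => ?_⟩
  ext j d
  change MvPowerSeries.coeff d (G (σ d) c j) = _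
  rw [hF]
  rfl

end Textile

section Order

variable {A : Type} [CommRing A] {n q : ℕ} {𝔫 : Ideal A} {N : ℕ}

lemma ordV_le {c : Fin q → MvPowerSeries (Fin n) A} {j : Fin q} {d : Fin n →₀ ℕ}
    (h : MvPowerSeries.coeff d (c j) ≠ 0) : ordV c ≤ (d.sum fun _ e => e : ℕ) :=
  sInf_le ⟨j, d, h, rfl⟩

lemma exists_coeff_ne_zero_degree_eq_ordV {c : Fin q → MvPowerSeries (Fin n) A} (hc : c ≠ 0) :
    ∃ (j : Fin q) (d : Fin n →₀ ℕ), MvPowerSeries.coeff d (c j) ≠ 0 ∧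
      ((d.sum fun _ e => e : ℕ) : ℕ∞) = ordV c := by
  obtain ⟨j, hj⟩ := Function.ne_iff.mp hc
  obtain ⟨d, hd⟩ : ∃ d, MvPowerSeries.coeff d (c j) ≠ 0 := by
    simpa [MvPowerSeries.ext_iff] using hj
  obtain ⟨j, d, hne, hord⟩ := csInf_mem (⟨_, j, d, hd, rfl⟩ :
    {N : ℕ∞ | ∃ (j : Fin q) (d : Fin n →₀ ℕ),
      MvPowerSeries.coeff d (c j) ≠ 0 ∧ N = (d.sum fun _ e => e : ℕ)}.Nonempty)
  exact ⟨j, d, hne, hord.symm⟩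

lemma ordV_eq_natCast_toNat {c : Fin q → MvPowerSeries (Fin n) A} (hc : c ≠ 0) :
    ordV c = (ordV c).toNat := by
  obtain ⟨j, d, -, hord⟩ := exists_coeff_ne_zero_degree_eq_ordV hc
  rw [← hord, ENat.toNat_natCast]

lemma powIdx_lt (hN : 𝔫 ^ N = ⊥) {a : A} (ha : a ≠ 0) : powIdx 𝔫 N a < N := by
  have hlt : ∀ i, a ∈ 𝔫 ^ i → i < N := fun i hi => by
    by_contra hi'
    exact ha (Ideal.mem_bot.mp (hN ▸ Ideal.pow_le_pow_right (not_lt.mp hi') hi))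
  rw [powIdx, if_neg ha]
  exact hlt _ (Nat.sSup_mem ⟨0, show a ∈ 𝔫 ^ 0 by simp⟩ ⟨N, fun i hi => (hlt i hi).le⟩)

lemma powAtMin_lt (hN : 𝔫 ^ N = ⊥) {c : Fin q → MvPowerSeries (Fin n) A} (hc : c ≠ 0) :
    powAtMin 𝔫 N c < N := by
  obtain ⟨j, d, hne, hord⟩ := exists_coeff_ne_zero_degree_eq_ordV hc
  calc powAtMin 𝔫 N c ≤ powIdx 𝔫 N (MvPowerSeries.coeff d (c j)) :=
        Nat.sInf_le ⟨j, d, hne, hord, rfl⟩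
    _ < N := powIdx_lt hN hne

lemma powIdx_neg (a : A) : powIdx 𝔫 N (-a) = powIdx 𝔫 N a := by
  rw [powIdx, powIdx]
  split_ifs <;> simp_all

lemma WOrd_neg (c : Fin q → MvPowerSeries (Fin n) A) : WOrd 𝔫 N (-c) = WOrd 𝔫 N c := by
  have hord : ordV (-c) = ordV c := by simp [ordV]
  simp [WOrd, powAtMin, hord, powIdx_neg]

/-- Since `pow < N` on nonzero coefficients, `N * ord + pow` orders nonzero cords as `W` does. -/
def wRank (𝔫 : Ideal A) (N : ℕ) (c : Fin q → MvPowerSeries (Fin n) A) : ℕ :=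
  N * (ordV c).toNat + powAtMin 𝔫 N c

lemma wRank_lt (hN : 𝔫 ^ N = ⊥) {c : Fin q → MvPowerSeries (Fin n) A} (hc : c ≠ 0) :
    wRank 𝔫 N c < N * ((ordV c).toNat + 1) := by
  have := powAtMin_lt hN hc
  rw [wRank, mul_add_one]
  omega

lemma wRank_lt_wRank (hN : 𝔫 ^ N = ⊥) {c c' : Fin q → MvPowerSeries (Fin n) A}
    (hc : c ≠ 0) (hc' : c' ≠ 0) (h : refLt (WOrd 𝔫 N c) (WOrd 𝔫 N c')) :
    wRank 𝔫 N c < wRank 𝔫 N c' := by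
  rcases h with hord | ⟨hord, hpow⟩
  · rw [WOrd, WOrd, ordV_eq_natCast_toNat hc, ordV_eq_natCast_toNat hc', Nat.cast_lt] at hord
    calc wRank 𝔫 N c < N * ((ordV c).toNat + 1) := wRank_lt hN hc
      _ ≤ N * (ordV c').toNat := Nat.mul_le_mul_left N hord
      _ ≤ wRank 𝔫 N c' := Nat.le_add_right _ _
  · simp only [WOrd] at hord hpow
    simp only [wRank, hord]
    omega

lemma le_wRank_of_refLt_chain (hN : 𝔫 ^ N = ⊥) {c : ℕ → Fin q → MvPowerSeries (Fin n) A}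
    (hzero : ∀ s, c s = 0 → c (s + 1) = 0)
    (hlt : ∀ s, c s ≠ 0 → refLt (WOrd 𝔫 N (c s)) (WOrd 𝔫 N (c (s + 1)))) :
    ∀ s, c s ≠ 0 → s ≤ wRank 𝔫 N (c s)
  | 0, _ => Nat.zero_le _
  | s + 1, hc => by
    have hs : c s ≠ 0 := fun h0 => hc (hzero s h0)
    exact (le_wRank_of_refLt_chain hN hzero hlt s hs).trans_lt (wRank_lt_wRank hN hs hc (hlt s hs))

theorem coeff_eq_zero_of_refLt_chain (hN : 𝔫 ^ N = ⊥) {c : ℕ → Fin q → MvPowerSeries (Fin n) A}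
    (hzero : ∀ s, c s = 0 → c (s + 1) = 0)
    (hlt : ∀ s, c s ≠ 0 → refLt (WOrd 𝔫 N (c s)) (WOrd 𝔫 N (c (s + 1))))
    (j : Fin q) (d : Fin n →₀ ℕ) :
    MvPowerSeries.coeff d (c (N * ((d.sum fun _ e => e) + 1)) j) = 0 := by
  set s := N * ((d.sum fun _ e => e) + 1)
  by_contra hne
  have hc : c s ≠ 0 := fun h0 => hne (by simp [h0])
  have hlarge : (d.sum fun _ e => e) < (ordV (c s)).toNat :=
    Nat.succ_lt_succ_iff.mp <| Nat.lt_of_mul_lt_mul_left <|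
      (le_wRank_of_refLt_chain hN hzero hlt s hc).trans_lt (wRank_lt hN hc)
  exact hlarge.not_ge (ENat.toNat_le_of_le_natCast (ordV_le hne))

end Order

section Contraction

variable {A : Type} [CommRing A] {n q : ℕ} {𝔫 : Ideal A} {N : ℕ}

def IsWOrdContractiveOn (𝔫 : Ideal A) (N : ℕ)
    (T : (Fin q → MvPowerSeries (Fin n) A) → Fin q → MvPowerSeries (Fin n) A)
    (S : Set (Fin q → MvPowerSeries (Fin n) A)) : Prop :=
  ∀ a ∈ S, ∀ b ∈ S, a ≠ b → refLt (WOrd 𝔫 N (a - b)) (WOrd 𝔫 N (T a - T b))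

variable {T T' : (Fin q → MvPowerSeries (Fin n) A) → Fin q → MvPowerSeries (Fin n) A}
  {S : Set (Fin q → MvPowerSeries (Fin n) A)}

lemma IsWOrdContractiveOn.congr (hT : IsWOrdContractiveOn 𝔫 N T S) (h : Set.EqOn T T' S) :
    IsWOrdContractiveOn 𝔫 N T' S := fun a ha b hb hab => by
  simpa only [h ha, h hb] using hT a ha b hb hab

lemma IsWOrdContractiveOn.const_sub (hT : IsWOrdContractiveOn 𝔫 N T S)
    (x : Fin q → MvPowerSeries (Fin n) A) : IsWOrdContractiveOn 𝔫 N (fun b => x - T b) S :=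
  fun a ha b hb hab => by
    rw [sub_sub_sub_cancel_left, ← neg_sub (T a) (T b), WOrd_neg]
    exact hT a ha b hb hab

theorem IsWOrdContractiveOn.coeff_iterate_eq (hN : 𝔫 ^ N = ⊥)
    (hT : IsWOrdContractiveOn 𝔫 N T S) (hmaps : Set.MapsTo T S S)
    {x a : Fin q → MvPowerSeries (Fin n) A} (hx : x ∈ S) (ha : a ∈ S) (hfix : T a = a)
    (j : Fin q) (d : Fin n →₀ ℕ) :
    MvPowerSeries.coeff d ((T^[N * ((d.sum fun _ e => e) + 1)] x) j) =
      MvPowerSeries.coeff d (a j) := by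
  have hzero : ∀ s, a - T^[s] x = 0 → a - T^[s + 1] x = 0 := fun s h0 => by
    rw [sub_eq_zero] at h0 ⊢
    rw [Function.iterate_succ_apply', ← h0, hfix]
  have hlt : ∀ s, a - T^[s] x ≠ 0 →
      refLt (WOrd 𝔫 N (a - T^[s] x)) (WOrd 𝔫 N (a - T^[s + 1] x)) := fun s hne => by
    have := hT a ha _ (hmaps.iterate s hx) (sub_ne_zero.mp hne)
    rwa [hfix, ← Function.iterate_succ_apply' T] at this
  have := coeff_eq_zero_of_refLt_chain hN hzero hlt j d
  rwa [Pi.sub_apply, map_sub, sub_eq_zero, eq_comm] at this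

end Contraction

lemma sub_mem_nbhd {A : Type} [CommRing A] {n q l : ℕ} {x y : Fin q → MvPowerSeries (Fin n) A}
    (hx : x ∈ nbhd A n q l) (hy : y ∈ nbhd A n q l) : x - y ∈ nbhd A n q l := fun j d hd => by
  simp [hx j d hd, hy j d hd]

theorem inverse_mapping_theorem_test_ring_general
    {A : Type} [CommRing A] [IsLocalRing A]
    (N : ℕ) (hN : (IsLocalRing.maximalIdeal A) ^ N = ⊥)
    {n m : ℕ} (l : ℕ)
    (U : Set (Fin m → MvPowerSeries (Fin n) A)) (hU : U = nbhd A n m l)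
    (W : Set (Fin m → MvPowerSeries (Fin n) A))
    (f ℓ ℓt h : (Fin m → MvPowerSeries (Fin n) A) → Fin m → MvPowerSeries (Fin n) A)
    (hf_tex : IsTextile f)
    (hℓ_tex : IsTextile ℓ)
    (hℓt_tex : IsTextile ℓt) (hℓt_lin : IsLinearMap A ℓt)
    (hdecomp : ∀ a ∈ U, f a = ℓ a + h a)
    (hfU : ∀ a ∈ U, f a ∈ W)
    (hℓℓt : ∀ w ∈ W, ℓt w ∈ U ∧ ℓ (ℓt w) = w)
    (hℓtℓ : ∀ a ∈ U, ℓt (ℓ a) = a)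
    (hcontr : ∀ a ∈ U, ∀ b ∈ U, a ≠ b →
      refLt (WOrd (IsLocalRing.maximalIdeal A) N (a - b))
            (WOrd (IsLocalRing.maximalIdeal A) N (ℓt (h a) - ℓt (h b)))) :
    ∃ g : (Fin m → MvPowerSeries (Fin n) A) → Fin m → MvPowerSeries (Fin n) A,
      IsTextile g ∧
      (∀ w ∈ f '' U, g w ∈ U ∧ f (g w) = w) ∧
      (∀ a ∈ U, g (f a) = a) := by
  subst hU
  set K := fun c => ℓt (f c - ℓ c)
  have hK_eq : ∀ b ∈ nbhd A n m l, K b = ℓt (f b) - b := fun b hb => by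
    simp only [K, hℓt_lin.map_sub, hℓtℓ b hb]
  have hK_contr : IsWOrdContractiveOn _ N K (nbhd A n m l) :=
    IsWOrdContractiveOn.congr hcontr fun b hb => by simp [K, hdecomp b hb]
  set T := fun w b => ℓt w - K b
  have hT_maps : ∀ a ∈ nbhd A n m l, Set.MapsTo (T (f a)) (nbhd A n m l) (nbhd A n m l) :=
    fun a ha b hb => by
      simp only [T, hK_eq b hb]
      exact sub_mem_nbhd (hℓℓt _ (hfU a ha)).1 (sub_mem_nbhd (hℓℓt _ (hfU b hb)).1 hb)
  have hT_fix : ∀ a ∈ nbhd A n m l, T (f a) a = a := fun a ha => by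
    simp [T, hK_eq a ha]
  set g := coeffDiag (fun s w => (T w)^[s] (ℓt w)) fun d => N * ((d.sum fun _ e => e) + 1)
  have hg : ∀ a ∈ nbhd A n m l, g (f a) = a := fun a ha => by
    ext j d
    exact (hK_contr.const_sub _).coeff_iterate_eq hN (hT_maps a ha) (hℓℓt _ (hfU a ha)).1 ha
      (hT_fix a ha) j d
  refine ⟨g, isTextile_coeffDiag (isTextile_iterate_sub hℓt_tex (hℓt_tex.comp
    (hf_tex.sub hℓ_tex))) _, ?_, hg⟩
  rintro _ ⟨a, ha, rfl⟩
  rw [hg a ha]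
  exact ⟨ha, rfl⟩

/-- **Inverse Mapping Theorem over a test-ring.**
Let `A` be a test-ring (local `k`-algebra with nilpotent maximal ideal), `U = m^l·C_A^m`, and
`f : U → C_A^m` textile with `f 0 = 0`, `f = ℓ + h` on `U` and `f(U) ⊆ W`, where `ℓ : U → W`
is an invertible linear textile map with linear inverse `ℓ̃`. If `ℓ̃∘h` is contractive on `U`
with respect to the refined order `W(·)`, then `f` admits a textile inverse on `U`. -/
theorem inverse_mapping_theorem_test_ring
    {k : Type} [Field k] [CharZero k]
    {A : Type} [CommRing A] [Algebra k A] [IsLocalRing A]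
    (N : ℕ) (hN : (IsLocalRing.maximalIdeal A) ^ N = ⊥)
    {n m : ℕ} (l : ℕ)
    (U : Set (Fin m → MvPowerSeries (Fin n) A)) (hU : U = nbhd A n m l)
    (W : Set (Fin m → MvPowerSeries (Fin n) A))
    (f ℓ ℓt h : (Fin m → MvPowerSeries (Fin n) A) → Fin m → MvPowerSeries (Fin n) A)
    (hf_tex : IsTextile f) (hf0 : f 0 = 0)
    (hℓ_tex : IsTextile ℓ) (hℓ_lin : IsLinearMap A ℓ)
    (hℓt_tex : IsTextile ℓt) (hℓt_lin : IsLinearMap A ℓt)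
    (hdecomp : ∀ a ∈ U, f a = ℓ a + h a)
    (hfU : ∀ a ∈ U, f a ∈ W)
    (hℓU : ∀ a ∈ U, ℓ a ∈ W)
    (hℓℓt : ∀ w ∈ W, ℓt w ∈ U ∧ ℓ (ℓt w) = w)
    (hℓtℓ : ∀ a ∈ U, ℓt (ℓ a) = a)
    (hcontr : ∀ a ∈ U, ∀ b ∈ U, a ≠ b →
      refLt (WOrd (IsLocalRing.maximalIdeal A) N (a - b))
            (WOrd (IsLocalRing.maximalIdeal A) N (ℓt (h a) - ℓt (h b)))) :
    ∃ g : (Fin m → MvPowerSeries (Fin n) A) → Fin m → MvPowerSeries (Fin n) A,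
      IsTextile g ∧
      (∀ w ∈ f '' U, g w ∈ U ∧ f (g w) = w) ∧
      (∀ a ∈ U, g (f a) = a) :=
  inverse_mapping_theorem_test_ring_general N hN l U hU W f ℓ ℓt h hf_tex hℓ_tex hℓt_tex hℓt_lin
    hdecomp hfU hℓℓt hℓtℓ hcontr
end
end

section
/- Wavrik's approximation theorem in one variable: Let k be a field of characteristic 0 and F ∈ k[x,y] an irreducible polynomial in two variables. Then for every integer q > 0 there exists an integer N such that: whenever ȳ ∈ k[[x]] satisfies F(x, ȳ) ≡ 0 mod (x)^N, there exists y(x) ∈ k[[x]] with F(x, y(x)) = 0 and y(x) ≡ ȳ mod (x)^q. -/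
/-!
View `F` as a polynomial `f(y)` over `k[x]`. Being irreducible in characteristic zero, `f` is
coprime to `∂f/∂y` over `k(x)`, and clearing denominators gives `u f + v f' = D` with
`0 ≠ D ∈ k[x]`. If `F(x, ȳ)` has order at least `2 ord D + q + 1`, this identity forces
`ord f'(ȳ) ≤ ord D`, so `f(ȳ) = f'(ȳ)² b` with `x ∣ b`. Tougeron's form of Hensel's lemma in the
`x`-adically complete ring `k[[x]]` then gives a root `y` with `f'(ȳ) b ∣ y - ȳ`, and
`ord (f'(ȳ) b) = ord f(ȳ) - ord f'(ȳ) ≥ q`.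
-/

open Polynomial

theorem Ideal.smodEq_pow_smul_top_iff {R : Type*} [CommRing R] {I : Ideal R} {x y : R} {n : ℕ} :
    x ≡ y [SMOD (I ^ n • ⊤ : Submodule R R)] ↔ x - y ∈ I ^ n := by
  rw [SModEq.sub_mem, Ideal.smul_eq_mul, Ideal.mul_top]

namespace Polynomial

section Hensel

variable {R : Type*} [CommRing R]

theorem exists_eval_sub_mul_eval_eq (f : R[X]) (y v : R) :
    ∃ r, f.eval (y - v * f.eval y) =
      f.eval y * (1 - f.derivative.eval y * v + r * f.eval y) := by
  obtain ⟨K, hK⟩ := f.binomExpansion y (-(v * f.eval y))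
  exact ⟨K * v ^ 2, by rw [sub_eq_add_neg, hK]; ring⟩

theorem eval_dvd_sub_of_isRoot {f : R[X]} {a y : R} (hy : f.IsRoot y)
    (hya : y - a ∈ Ideal.jacobson ⊥) (ha : IsUnit (f.derivative.eval a)) :
    f.eval a ∣ y - a := by
  obtain ⟨K, hK⟩ := f.binomExpansion a (y - a)
  obtain ⟨u, hu⟩ := ha
  have hunit : IsUnit (f.derivative.eval a + K * (y - a)) := by
    have h := Ideal.mem_jacobson_bot.mp (Ideal.mul_mem_left _ K hya) ↑u⁻¹
    rw [← hu]
    convert u.isUnit.mul h using 1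
    rw [mul_add, mul_one, mul_left_comm, Units.mul_inv, mul_one, add_comm]
  rw [← hunit.neg.dvd_mul_right]
  rw [add_sub_cancel, hy.eq_zero] at hK
  exact ⟨1, by linear_combination hK⟩

theorem eval_sub_eval_mem {J : Ideal R} {a b : R} (f : R[X]) (h : a - b ∈ J) :
    f.eval a - f.eval b ∈ J := by
  obtain ⟨c, hc⟩ := sub_dvd_eval_sub a b f
  rw [hc]
  exact J.mul_mem_right c h

/-- Newton's method with the derivative frozen at the starting point: `v` is meant to be an inverse
of `f'(a)`. -/
def chordIterate (f : R[X]) (v a : R) (n : ℕ) : R :=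
  (fun y ↦ y - v * f.eval y)^[n] a

theorem chordIterate_succ (f : R[X]) (v a : R) (n : ℕ) :
    chordIterate f v a (n + 1) =
      chordIterate f v a n - v * f.eval (chordIterate f v a n) :=
  Function.iterate_succ_apply' _ _ _

theorem chordIterate_sub_mem_and_eval_mem {I : Ideal R} {f : R[X]} {a v : R}
    (hv : f.derivative.eval a * v = 1) (ha : f.eval a ∈ I) (n : ℕ) :
    chordIterate f v a n - a ∈ I ∧ f.eval (chordIterate f v a n) ∈ I ^ (n + 1) := by
  induction n with
  | zero => simpa [chordIterate] using ha
  | succ n ih =>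
    set y := chordIterate f v a n
    obtain ⟨hy, hfy⟩ := ih
    have hfyI : f.eval y ∈ I := Ideal.pow_le_self n.succ_ne_zero hfy
    refine ⟨?_, ?_⟩
    · rw [chordIterate_succ, sub_right_comm]
      exact I.sub_mem hy (I.mul_mem_left v hfyI)
    · obtain ⟨r, hr⟩ := f.exists_eval_sub_mul_eval_eq y v
      have hderiv : f.derivative.eval a - f.derivative.eval y ∈ I :=
        eval_sub_eval_mem _ (by rw [← neg_sub]; exact I.neg_mem hy)
      have hcofactor : 1 - f.derivative.eval y * v + r * f.eval y ∈ I := by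
        rw [← hv, ← sub_mul]
        exact I.add_mem (I.mul_mem_right v hderiv) (I.mul_mem_left r hfyI)
      rw [chordIterate_succ, hr, pow_succ]
      exact Ideal.mul_mem_mul hfy hcofactor

theorem exists_isRoot_sub_mem_of_isUnit {I : Ideal R} [IsAdicComplete I R] {f : R[X]} {a : R}
    (ha : f.eval a ∈ I) (hu : IsUnit (f.derivative.eval a)) :
    ∃ y, f.IsRoot y ∧ y - a ∈ I := by
  obtain ⟨v, hv⟩ := hu.exists_right_inv
  have hx := chordIterate_sub_mem_and_eval_mem hv ha
  have hcauchy : AdicCompletion.IsAdicCauchy I R (chordIterate f v a) := by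
    refine (AdicCompletion.isAdicCauchy_iff I R _).mpr fun n ↦ ?_
    rw [Ideal.smodEq_pow_smul_top_iff, chordIterate_succ, sub_sub_cancel]
    exact Ideal.mul_mem_left _ v (Ideal.pow_le_pow_right n.le_succ (hx n).2)
  obtain ⟨y, hy⟩ := IsPrecomplete.prec' _ hcauchy
  refine ⟨y, IsHausdorff.haus' (I := I) _ fun n ↦ ?_, ?_⟩
  · have hyn : f.eval y - f.eval (chordIterate f v a n) ∈ I ^ n := by
      refine eval_sub_eval_mem f ?_
      rw [← neg_sub]
      exact (I ^ n).neg_mem (Ideal.smodEq_pow_smul_top_iff.mp (hy n))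
    rw [Ideal.smodEq_pow_smul_top_iff, sub_zero]
    simpa using (I ^ n).add_mem hyn (Ideal.pow_le_pow_right n.le_succ (hx n).2)
  · have h1 := Ideal.smodEq_pow_smul_top_iff.mp (hy 1)
    rw [pow_one] at h1
    simpa using I.sub_mem (hx 1).1 h1

theorem exists_isRoot_eval_dvd_sub_of_isUnit {I : Ideal R} [IsAdicComplete I R] {f : R[X]}
    {a : R} (ha : f.eval a ∈ I) (hu : IsUnit (f.derivative.eval a)) :
    ∃ y, f.IsRoot y ∧ f.eval a ∣ y - a := by
  obtain ⟨y, hy, hya⟩ := exists_isRoot_sub_mem_of_isUnit ha hu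
  exact ⟨y, hy, eval_dvd_sub_of_isRoot hy (IsAdicComplete.le_jacobson_bot I hya) hu⟩

theorem exists_isRoot_of_eval_eq_derivative_sq_mul [IsDomain R] {I : Ideal R}
    [IsAdicComplete I R] {f : R[X]} {a b : R} (hb : b ∈ I)
    (hfa : f.eval a = f.derivative.eval a ^ 2 * b) :
    ∃ y, f.IsRoot y ∧ f.derivative.eval a * b ∣ y - a := by
  set c := f.derivative.eval a
  rcases eq_or_ne c 0 with hc | hc
  · exact ⟨a, by simp [IsRoot, hfa, hc], by simp⟩
  -- `f(a + c t) = c² h(t)` with `h(0) = b` and `h'(0) = 1`, so `h` has a simple root near `0`.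
  set p := (taylor a f).comp (C c * X)
  have hp : C (c ^ 2) ∣ p := by
    refine (C_dvd_iff_dvd_coeff _ _).mpr fun n ↦ ?_
    rw [comp_C_mul_X_coeff]
    match n with
    | 0 => simp [taylor_coeff_zero, hfa]
    | 1 => simp [taylor_coeff_one, c, sq]
    | n + 2 => exact Dvd.dvd.mul_left (pow_dvd_pow c (by omega)) _
  obtain ⟨h, hph⟩ := hp
  have hc2 : c ^ 2 ≠ 0 := pow_ne_zero 2 hc
  have hh0 : h.eval 0 = b := by
    apply mul_left_cancel₀ hc2
    rw [← eval_C_mul, ← hph, ← coeff_zero_eq_eval_zero, comp_C_mul_X_coeff, taylor_coeff_zero,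
      hfa, pow_zero, mul_one]
  have hh1 : h.derivative.eval 0 = 1 := by
    apply mul_left_cancel₀ hc2
    rw [← eval_C_mul, ← derivative_C_mul, ← hph, ← coeff_zero_eq_eval_zero, coeff_derivative,
      comp_C_mul_X_coeff, taylor_coeff_one]
    simp [c, sq]
  obtain ⟨t, ht, hbt⟩ := exists_isRoot_eval_dvd_sub_of_isUnit (f := h) (a := 0) (I := I)
    (by rwa [hh0]) (by rw [hh1]; exact isUnit_one)
  refine ⟨c * t + a, ?_, ?_⟩
  · have : p.eval t = f.eval (c * t + a) := by simp [p, taylor_eval]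
    rw [IsRoot, ← this, hph, eval_C_mul, ht.eq_zero, mul_zero]
  · rw [add_sub_cancel_right]
    rw [hh0, sub_zero] at hbt
    exact mul_dvd_mul_left c hbt

end Hensel

section FractionField

variable {R K : Type*} [CommRing R] [IsDomain R] [Field K] [Algebra R K] [IsFractionRing R K]

theorem exists_mul_add_mul_eq_C_of_isCoprime_map {p q : R[X]}
    (h : IsCoprime (p.map (algebraMap R K)) (q.map (algebraMap R K))) :
    ∃ u v : R[X], ∃ D : R, D ≠ 0 ∧ u * p + v * q = C D := by
  obtain ⟨A, B, hAB⟩ := h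
  obtain ⟨a, ha, hA⟩ := IsLocalization.integerNormalization_spec (nonZeroDivisors R) A
  obtain ⟨b, hb, hB⟩ := IsLocalization.integerNormalization_spec (nonZeroDivisors R) B
  refine ⟨C b * IsLocalization.integerNormalization (nonZeroDivisors R) A,
    C a * IsLocalization.integerNormalization (nonZeroDivisors R) B, a * b,
    mul_ne_zero (nonZeroDivisors.ne_zero ha) (nonZeroDivisors.ne_zero hb), ?_⟩
  apply map_injective _ (IsFractionRing.injective R K)
  simp only [Polynomial.map_add, Polynomial.map_mul, map_C, hA, hB, Algebra.smul_def,
    algebraMap_apply, map_mul]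
  linear_combination C (algebraMap R K a) * C (algebraMap R K b) * hAB

theorem _root_.Irreducible.separable_map [IsGCDMonoid R] [CharZero K] {f : R[X]}
    (hf : Irreducible f) :
    (f.map (algebraMap R K)).Separable := by
  rcases eq_or_ne f.natDegree 0 with hdeg | hdeg
  · rw [eq_C_of_natDegree_eq_zero hdeg, map_C, separable_C, isUnit_iff_ne_zero, ne_eq,
      IsFractionRing.to_map_eq_zero_iff, ← C_eq_zero, ← eq_C_of_natDegree_eq_zero hdeg]
    exact hf.ne_zero
  · exact ((hf.isPrimitive hdeg).irreducible_iff_irreducible_map_fraction_map.mp hf).separable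

end FractionField

theorem _root_.Irreducible.exists_mul_add_mul_derivative_eq_C {R : Type*} [CommRing R] [IsDomain R]
    [IsGCDMonoid R] [CharZero R] {f : R[X]} (hf : Irreducible f) :
    ∃ u v : R[X], ∃ D : R, D ≠ 0 ∧ u * f + v * f.derivative = C D := by
  have : CharZero (FractionRing R) :=
    charZero_of_injective_algebraMap (IsFractionRing.injective R (FractionRing R))
  apply exists_mul_add_mul_eq_C_of_isCoprime_map (K := FractionRing R)
  rw [← derivative_map]
  exact hf.separable_map

end Polynomial

namespace PowerSeries

theorem order_le_of_mul_add_mul_eq {R : Type*} [Semiring R] {u v a b d : R⟦X⟧}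
    (h : u * a + v * b = d) (hda : d.order < a.order) : b.order ≤ d.order := by
  by_contra! hbd
  have : min a.order b.order ≤ d.order := by
    rw [← h]
    calc min a.order b.order ≤ min (u * a).order (v * b).order :=
          min_le_min (le_add_self.trans (le_order_mul u a)) (le_add_self.trans (le_order_mul v b))
      _ ≤ (u * a + v * b).order := min_order_le_order_add _ _
  exact (lt_min hda hbd).not_ge this

variable {k : Type*} [Field k]

theorem dvd_iff_order_le {c d : k⟦X⟧} : c ∣ d ↔ c.order ≤ d.order := by
  refine ⟨fun ⟨e, he⟩ ↦ he ▸ order_mul c e ▸ le_self_add, fun h ↦ ?_⟩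
  rcases eq_or_ne c 0 with rfl | hc
  · rw [order_zero, top_le_iff, order_eq_top] at h
    rw [h]
  have hunit : IsUnit c.divXPowOrder := by
    rw [isUnit_iff_constantCoeff, isUnit_iff_ne_zero, ne_eq,
      constantCoeff_divXPowOrder_eq_zero_iff]
    exact hc
  rw [← X_pow_order_mul_divXPowOrder (f := c), hunit.mul_right_dvd, X_pow_dvd_iff]
  exact fun m hm ↦ coeff_of_lt_order m
    (lt_of_lt_of_le (by exact_mod_cast hm) ((ENat.natCast_toNat_le_self _).trans h))

theorem exists_isRoot_of_two_mul_order_derivative_lt {f : k⟦X⟧[X]} {a : k⟦X⟧}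
    (h : 2 * (f.derivative.eval a).order < (f.eval a).order) :
    ∃ y, f.IsRoot y ∧ (f.eval a).order ≤ (f.derivative.eval a).order + (y - a).order := by
  set c := f.derivative.eval a
  obtain ⟨b, hb⟩ : c ^ 2 ∣ f.eval a := by
    rw [dvd_iff_order_le, order_pow, nsmul_eq_mul, Nat.cast_ofNat]
    exact h.le
  have hborder : (f.eval a).order = c.order + (c * b).order := by
    rw [hb, order_mul, order_mul, sq, order_mul, add_assoc]
  have hbX : b ∈ Ideal.span {X} := by
    rw [Ideal.mem_span_singleton, dvd_iff_order_le, order_X, Order.one_le_iff_ne_zero]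
    rintro hb0
    rw [hb, order_mul, hb0, add_zero, order_pow, nsmul_eq_mul, Nat.cast_ofNat] at h
    exact h.false
  obtain ⟨y, hy, hya⟩ := exists_isRoot_of_eval_eq_derivative_sq_mul hbX hb
  exact ⟨y, hy, hborder ▸ add_le_add_right (dvd_iff_order_le.mp hya) _⟩

theorem exists_isRoot_near_of_mul_add_mul_derivative_eq_C {g u v : k⟦X⟧[X]} {d : k⟦X⟧}
    (hd : d ≠ 0) (h : u * g + v * g.derivative = Polynomial.C d) (q : ℕ) :
    ∃ N : ℕ, ∀ ybar : k⟦X⟧, (N : ℕ∞) ≤ (g.eval ybar).order →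
      ∃ y, g.IsRoot y ∧ (q : ℕ∞) ≤ (y - ybar).order := by
  set e := d.order.toNat
  have he : d.order = e := (ENat.natCast_toNat (order_finite_iff_ne_zero.mpr hd).ne).symm
  refine ⟨2 * e + q + 1, fun ybar hN ↦ ?_⟩
  have hc : (g.derivative.eval ybar).order ≤ e := by
    rw [← he]
    refine order_le_of_mul_add_mul_eq (u := u.eval ybar) (v := v.eval ybar)
      (a := g.eval ybar) ?_ ?_
    · simpa using congr_arg (eval ybar) h
    · rw [he]; exact lt_of_lt_of_le (by exact_mod_cast (by omega : e < 2 * e + q + 1)) hN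
  have h2c : 2 * (g.derivative.eval ybar).order < (2 * e + q + 1 : ℕ) :=
    calc 2 * (g.derivative.eval ybar).order ≤ 2 * (e : ℕ∞) := by gcongr
      _ < (2 * e + q + 1 : ℕ) := by exact_mod_cast (by omega : 2 * e < 2 * e + q + 1)
  obtain ⟨y, hy, hya⟩ := exists_isRoot_of_two_mul_order_derivative_lt (h2c.trans_le hN)
  refine ⟨y, hy, ?_⟩
  have hsum := hN.trans (hya.trans (add_le_add_left hc _))
  generalize (y - ybar).order = r at hsum ⊢
  induction r using ENat.recTopCoe with
  | top => exact le_top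
  | coe r => norm_cast at hsum ⊢; omega

end PowerSeries

namespace MvPolynomial

variable (k : Type*) [CommRing k]

noncomputable def finTwoAlgEquiv : MvPolynomial (Fin 2) k ≃ₐ[k] k[X][X] :=
  (renameEquiv k (Equiv.swap 0 1)).trans
    ((finSuccEquiv k 1).trans (Polynomial.mapAlgEquiv (uniqueAlgEquiv k (Fin 1))))

variable {k}

@[simp]
theorem finTwoAlgEquiv_X_zero : finTwoAlgEquiv k (X 0) = Polynomial.C Polynomial.X := by
  have h : (1 : Fin 2) = Fin.succ 0 := rfl
  simp only [finTwoAlgEquiv, AlgEquiv.trans_apply, renameEquiv_apply, rename_X,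
    Equiv.swap_apply_left]
  rw [h, finSuccEquiv_X_succ]
  simp

@[simp]
theorem finTwoAlgEquiv_X_one : finTwoAlgEquiv k (X 1) = Polynomial.X := by
  simp [finTwoAlgEquiv, finSuccEquiv_X_zero]

theorem eval_map_finTwoAlgEquiv (F : MvPolynomial (Fin 2) k) (y : PowerSeries k) :
    ((finTwoAlgEquiv k F).map (algebraMap k[X] (PowerSeries k))).eval y =
      aeval ![PowerSeries.X, y] F := by
  rw [eval_map_algebraMap]
  have : ((Polynomial.aeval y).restrictScalars k).comp (finTwoAlgEquiv k).toAlgHom =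
      aeval ![PowerSeries.X, y] := by
    refine algHom_ext fun i ↦ ?_
    fin_cases i <;> simp [PowerSeries.algebraMap_apply']
  exact congr($this F)

end MvPolynomial

theorem wavrik_approximation_one_variable_general
    {k : Type} [Field k] [CharZero k]
    (F : MvPolynomial (Fin 2) k) (hF : Irreducible F) (q : ℕ) :
    ∃ N : ℕ, ∀ ybar : PowerSeries k,
      (N : ℕ∞) ≤ PowerSeries.order (MvPolynomial.aeval ![PowerSeries.X, ybar] F) →
      ∃ y : PowerSeries k,
        MvPolynomial.aeval ![PowerSeries.X, y] F = 0 ∧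
        (q : ℕ∞) ≤ PowerSeries.order (y - ybar) := by
  set φ := algebraMap k[X] (PowerSeries k)
  obtain ⟨u, v, D, hD, hBezout⟩ :=
    (hF.map (MvPolynomial.finTwoAlgEquiv k)).exists_mul_add_mul_derivative_eq_C
  have hφD : φ D ≠ 0 := by
    rw [PowerSeries.algebraMap_apply', Algebra.algebraMap_self, PowerSeries.map_id, id]
    exact mt Polynomial.coe_eq_zero_iff.mp hD
  have hφBezout : u.map φ * (MvPolynomial.finTwoAlgEquiv k F).map φ +
      v.map φ * ((MvPolynomial.finTwoAlgEquiv k F).map φ).derivative = C (φ D) := by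
    rw [derivative_map, ← Polynomial.map_mul, ← Polynomial.map_mul, ← Polynomial.map_add,
      hBezout, map_C]
  obtain ⟨N, hN⟩ :=
    PowerSeries.exists_isRoot_near_of_mul_add_mul_derivative_eq_C hφD hφBezout q
  refine ⟨N, fun ybar hybar ↦ ?_⟩
  simp_rw [← MvPolynomial.eval_map_finTwoAlgEquiv] at hybar ⊢
  exact hN ybar hybar

/-- **Wavrik's approximation theorem in one variable.**
Let `F ∈ k[x,y]` be irreducible.  For every `q > 0` there is an `N` such that any
`ȳ ∈ k[[x]]` with `F(x,ȳ) ≡ 0 mod (x)^N` can be approximated to order `q` by an exact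
solution: there is `y(x) ∈ k[[x]]` with `F(x,y(x)) = 0` and `y(x) ≡ ȳ mod (x)^q`. -/
theorem wavrik_approximation_one_variable
    {k : Type} [Field k] [CharZero k]
    (F : MvPolynomial (Fin 2) k) (hF : Irreducible F) (q : ℕ) (hq : 0 < q) :
    ∃ N : ℕ, ∀ ybar : PowerSeries k,
      (N : ℕ∞) ≤ PowerSeries.order (MvPolynomial.aeval ![PowerSeries.X, ybar] F) →
      ∃ y : PowerSeries k,
        MvPolynomial.aeval ![PowerSeries.X, y] F = 0 ∧
        (q : ℕ∞) ≤ PowerSeries.order (y - ybar) :=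
  wavrik_approximation_one_variable_general F hF q
end
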